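/- For all integers n and k with 1 ≤ k ≤ n, the total number of non-symmetric peaks over all set partitions of [n] with exactly k blocks (i.e., the sum over all π ∈ P_{n,k}, in canonical sequential form, of the number of indices i with π_i < π_{i+1} > π_{i+2} and π_i ≠ π_{i+2}) equals C(k−1,2)·S(n−1,k) + 2·Σ_{j=3}^{k} C(j,3) · Σ_{i=3}^{n−k} j^{i−3} · S(n−i,k), where S(m,k) denotes the Stirling number of the second kind. -/

import Mathlib

open scoped BigOperators

/-- The set of canonical sequential forms (restricted growth functions) of
set partitions of `[n] = {1,…,n}` with exactly `k` blocks: words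
`π : Fin n → ℕ` with letters in `{1,…,k}` satisfying `π 0 = 1`,
`π i ≤ 1 + max (π 0, …, π (i-1))` for `i ≠ 0`, and `max π = k`. -/
def SetPartitionWords (n k : ℕ) : Set (Fin n → ℕ) :=
  {π | (∀ i, 1 ≤ π i) ∧
       (∀ i : Fin n, (i : ℕ) = 0 → π i = 1) ∧
       (∀ i : Fin n, (i : ℕ) ≠ 0 →
          π i ≤ 1 + (Finset.univ.filter (fun j : Fin n => j < i)).sup π) ∧
       Finset.univ.sup π = k}

/-- Words of length `n` over the alphabet `[j] = {1,…,j}`. -/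
def Words (n j : ℕ) : Set (Fin n → ℕ) :=
  {w | ∀ i, 1 ≤ w i ∧ w i ≤ j}

/-- The number of symmetric peaks of a word: positions `ℓ` with
`π ℓ < π (ℓ+1) > π (ℓ+2)` and `π ℓ = π (ℓ+2)`. -/
noncomputable def sympeak {n : ℕ} (π : Fin n → ℕ) : ℕ :=
  Set.ncard {ℓ : Fin n | ∃ h : (ℓ : ℕ) + 2 < n,
    π ℓ < π ⟨(ℓ : ℕ) + 1, by omega⟩ ∧
    π ⟨(ℓ : ℕ) + 2, h⟩ < π ⟨(ℓ : ℕ) + 1, by omega⟩ ∧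
    π ℓ = π ⟨(ℓ : ℕ) + 2, h⟩}

/-- The number of non-symmetric peaks of a word: positions `ℓ` with
`π ℓ < π (ℓ+1) > π (ℓ+2)` and `π ℓ ≠ π (ℓ+2)`. -/
noncomputable def nonsympeak {n : ℕ} (π : Fin n → ℕ) : ℕ :=
  Set.ncard {ℓ : Fin n | ∃ h : (ℓ : ℕ) + 2 < n,
    π ℓ < π ⟨(ℓ : ℕ) + 1, by omega⟩ ∧
    π ⟨(ℓ : ℕ) + 2, h⟩ < π ⟨(ℓ : ℕ) + 1, by omega⟩ ∧
    π ℓ ≠ π ⟨(ℓ : ℕ) + 2, h⟩}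

/-- The Stirling number of the second kind `S(n,k)`: the number of set
partitions of an `n`-element set into exactly `k` nonempty blocks. -/
noncomputable def stirlingS2 (n k : ℕ) : ℕ :=
  Nat.card {P : Finpartition (Finset.univ : Finset (Fin n)) // P.parts.card = k}

/-!
Cutting off the last letter matches the restricted growth words of length `n + 1` and maximum `k`
with the pairs `(σ, c)` where either `σ` has maximum `k` and `c ∈ [1, k]`, or `σ` has maximum
`k - 1` and `c = k`. A set partition is determined by which positions share a block, and a
restricted growth word by which positions carry equal letters, so these words are counted by
`S(n, k)`, and the decomposition is the recurrence `S(n+1,k) = k S(n,k) + S(n,k-1)`.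

Appending `c` can only create a peak at the last three positions, and none when `c = k` is a new
maximum. Counting the letters `c` that complete a non-symmetric peak `a b c`, and summing over the
last two letters `a b` of `σ` (again by cutting off the last letter), the total `T(n, k)` satisfies
`T(n+1,k) = k T(n,k) + T(n,k-1) + 2 C(k,3) S(n-2,k) + (k-2) S(n-1,k-1)`. The closed form satisfies
the same recurrence, by `S(m,k) = Σ_s k^s S(m-1-s,k-1)`, and both vanish for `n ≤ 2`.
-/

open Finset

theorem Fin.sup_univ_snoc {α : Type*} [SemilatticeSup α] [OrderBot α] {n : ℕ} (σ : Fin n → α)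
    (c : α) : univ.sup (Fin.snoc σ c : Fin (n + 1) → α) = univ.sup σ ⊔ c := by
  rw [Fin.univ_castSuccEmb, sup_cons, sup_map, sup_comm]
  simp [Function.comp_def]

theorem Finset.card_image_eq_of_forall_eq_iff {α β γ : Type*} [DecidableEq β] [DecidableEq γ]
    {s : Finset α} {f : α → β} {g : α → γ} (h : ∀ a ∈ s, ∀ b ∈ s, f a = f b ↔ g a = g b) :
    #(s.image f) = #(s.image g) := by
  set t := s.image fun a => (f a, g a)
  have hfst : Set.InjOn Prod.fst (t : Set (β × γ)) := by
    simp only [t, coe_image]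
    rintro _ ⟨a, ha, rfl⟩ _ ⟨b, hb, rfl⟩ (hab : f a = f b)
    exact Prod.ext hab ((h a ha b hb).mp hab)
  have hsnd : Set.InjOn Prod.snd (t : Set (β × γ)) := by
    simp only [t, coe_image]
    rintro _ ⟨a, ha, rfl⟩ _ ⟨b, hb, rfl⟩ (hab : g a = g b)
    exact Prod.ext ((h a ha b hb).mpr hab) hab
  calc #(s.image f) = #(t.image Prod.fst) := by rw [image_image]; rfl
    _ = #(t.image Prod.snd) := by rw [card_image_of_injOn hfst, card_image_of_injOn hsnd]
    _ = #(s.image g) := by rw [image_image]; rfl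

namespace Finpartition

variable {α : Type*} [DecidableEq α] {s : Finset α}

theorem parts_eq_image_part (P : Finpartition s) : P.parts = s.image P.part := by
  ext t
  refine ⟨fun ht => ?_, fun ht => ?_⟩
  · obtain ⟨a, ha, rfl⟩ := P.part_surjOn ht
    exact mem_image_of_mem _ ha
  · obtain ⟨a, ha, rfl⟩ := mem_image.mp ht
    exact P.part_mem.mpr ha

theorem ext_of_part_eq_part_iff {P Q : Finpartition s}
    (h : ∀ a ∈ s, ∀ b ∈ s, P.part a = P.part b ↔ Q.part a = Q.part b) : P = Q := by
  have hpart : ∀ a ∈ s, P.part a = Q.part a := fun a ha => by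
    ext b
    by_cases hb : b ∈ s
    · rw [P.mem_part_iff_part_eq_part hb ha, Q.mem_part_iff_part_eq_part hb ha, h b hb a ha]
    · exact iff_of_false (fun h => hb (P.part_subset a h)) (fun h => hb (Q.part_subset a h))
  exact Finpartition.ext (by rw [P.parts_eq_image_part, Q.parts_eq_image_part, image_congr hpart])

theorem part_ofSetoid_eq_iff [Fintype α] {r : Setoid α} [DecidableRel r.r] {a b : α} :
    (ofSetoid r).part a = (ofSetoid r).part b ↔ r a b := by
  rw [← mem_part_iff_part_eq_part _ (mem_univ a) (mem_univ b), mem_part_ofSetoid_iff_rel, r.comm']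

end Finpartition

theorem Nat.stirlingSecond_succ_right_eq_sum (m k : ℕ) :
    stirlingSecond m (k + 1) = ∑ s ∈ range m, (k + 1) ^ s * stirlingSecond (m - 1 - s) k := by
  induction m with
  | zero => simp
  | succ m ih =>
    rw [stirlingSecond_succ_succ, ih, sum_range_succ', mul_sum]
    simp only [pow_zero, one_mul, Nat.add_sub_cancel, Nat.sub_zero, pow_succ]
    congr 1
    refine sum_congr rfl fun s _ => ?_
    rw [show m - (s + 1) = m - 1 - s by omega]
    ring

-- At `i = 0` the prefix maximum is `0`, which forces `π 0 = 1`.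
def IsRestrictedGrowth {n : ℕ} (π : Fin n → ℕ) : Prop :=
  ∀ i, 1 ≤ π i ∧ π i ≤ (Iio i).sup π + 1

theorem mem_setPartitionWords_iff {n k : ℕ} {π : Fin n → ℕ} :
    π ∈ SetPartitionWords n k ↔ IsRestrictedGrowth π ∧ univ.sup π = k := by
  simp only [SetPartitionWords, IsRestrictedGrowth, Set.mem_ofPred_eq, filter_gt_eq_Iio]
  refine ⟨fun ⟨h1, h0, hg, hk⟩ => ⟨fun i => ⟨h1 i, by grind⟩, hk⟩,
    fun ⟨h, hk⟩ => ⟨fun i => (h i).1, fun i hi => ?_, fun i _ => by grind, hk⟩⟩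
  have hempty : Iio i = ∅ := by ext j; simp [Fin.lt_def, hi]
  have := h i
  rw [hempty, sup_empty] at this
  exact le_antisymm (by simpa using this.2) this.1

theorem isRestrictedGrowth_snoc_iff {n : ℕ} {σ : Fin n → ℕ} {c : ℕ} :
    IsRestrictedGrowth (Fin.snoc σ c : Fin (n + 1) → ℕ) ↔
      IsRestrictedGrowth σ ∧ 1 ≤ c ∧ c ≤ univ.sup σ + 1 := by
  have hcast (i : Fin n) :
      (Iio i.castSucc).sup (Fin.snoc σ c : Fin (n + 1) → ℕ) = (Iio i).sup σ := by
    rw [Fin.Iio_castSucc, sup_map]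
    simp [Function.comp_def]
  have hlast : (Iio (Fin.last n)).sup (Fin.snoc σ c : Fin (n + 1) → ℕ) = univ.sup σ := by
    rw [Fin.Iio_last_eq_map, sup_map]
    simp [Function.comp_def]
  simp only [IsRestrictedGrowth, Fin.forall_fin_succ', Fin.snoc_castSucc, Fin.snoc_last, hcast,
    hlast]

namespace IsRestrictedGrowth

theorem range_eq {n : ℕ} {π : Fin n → ℕ} (hπ : IsRestrictedGrowth π) :
    Set.range π = Set.Icc 1 (univ.sup π) := by
  induction π using Fin.snocInduction with
  | elim0 => simp
  | snoc σ c ih =>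
    obtain ⟨hσ, hc1, hc⟩ := isRestrictedGrowth_snoc_iff.mp hπ
    rw [Fin.range_snoc, ih hσ, Fin.sup_univ_snoc]
    ext x
    simp only [Set.mem_insert_iff, Set.mem_Icc]
    omega

theorem card_image_eq_sup {n : ℕ} {π : Fin n → ℕ} (hπ : IsRestrictedGrowth π) :
    #(univ.image π) = univ.sup π := by
  have : univ.image π = Icc 1 (univ.sup π) := by
    rw [← coe_inj, coe_image, coe_univ, Set.image_univ, hπ.range_eq, coe_Icc]
  rw [this, Nat.card_Icc, Nat.add_sub_cancel]

theorem eq_of_forall_eq_iff {n : ℕ} {π π' : Fin n → ℕ} (hπ : IsRestrictedGrowth π)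
    (hπ' : IsRestrictedGrowth π') (h : ∀ i j, π i = π j ↔ π' i = π' j) : π = π' := by
  induction n with
  | zero => exact funext fun i => i.elim0
  | succ n ih =>
    obtain ⟨σ, c, rfl⟩ : ∃ σ c, π = Fin.snoc σ c := ⟨_, _, (Fin.snoc_init_self π).symm⟩
    obtain ⟨σ', c', rfl⟩ : ∃ σ c, π' = Fin.snoc σ c := ⟨_, _, (Fin.snoc_init_self π').symm⟩
    obtain ⟨hσ, hc1, hc⟩ := isRestrictedGrowth_snoc_iff.mp hπ
    obtain ⟨hσ', hc1', hc'⟩ := isRestrictedGrowth_snoc_iff.mp hπ'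
    obtain rfl : σ = σ' := ih hσ hσ' fun i j => by simpa using h i.castSucc j.castSucc
    have hlast (i : Fin n) : σ i = c ↔ σ i = c' := by simpa using h i.castSucc (Fin.last n)
    congr 1
    by_cases hold : c ∈ Set.range σ
    · obtain ⟨j, rfl⟩ := hold
      exact (hlast j).mp rfl
    · -- a letter not seen before must be the next unused one
      have hold' : c' ∉ Set.range σ := fun ⟨j, hj⟩ => hold ⟨j, (hlast j).mpr hj⟩
      rw [hσ.range_eq, Set.mem_Icc] at hold hold'
      omega

end IsRestrictedGrowth

theorem exists_isRestrictedGrowth_forall_eq_iff {n : ℕ} (r : Setoid (Fin n)) :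
    ∃ π : Fin n → ℕ, IsRestrictedGrowth π ∧ ∀ i j, π i = π j ↔ r i j := by
  induction n with
  | zero => exact ⟨Fin.elim0, fun i => i.elim0, fun i => i.elim0⟩
  | succ n ih =>
    obtain ⟨σ, hσ, hσr⟩ := ih (r.comap Fin.castSucc)
    suffices ∃ c, 1 ≤ c ∧ c ≤ univ.sup σ + 1 ∧ ∀ i, σ i = c ↔ r i.castSucc (Fin.last n) by
      obtain ⟨c, hc1, hc, hcr⟩ := this
      refine ⟨Fin.snoc σ c, isRestrictedGrowth_snoc_iff.mpr ⟨hσ, hc1, hc⟩, fun i j => ?_⟩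
      induction i using Fin.lastCases <;> induction j using Fin.lastCases <;>
        simp [hσr, hcr, Setoid.comap_rel, eq_comm (a := c), r.comm' (y := Fin.last n)]
    by_cases hold : ∃ j : Fin n, r j.castSucc (Fin.last n)
    · obtain ⟨j, hj⟩ := hold
      refine ⟨σ j, (hσ j).1, (le_sup (mem_univ j)).trans (Nat.le_succ _), fun i => ?_⟩
      rw [hσr, Setoid.comap_rel]
      exact ⟨fun h => r.trans' h hj, fun h => r.trans' h (r.symm' hj)⟩
    · rw [not_exists] at hold
      refine ⟨univ.sup σ + 1, Nat.le_add_left 1 _, le_rfl, fun i => ?_⟩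
      have := le_sup (f := σ) (mem_univ i)
      simp only [hold i, iff_false]
      omega

theorem setPartitionWords_finite (n k : ℕ) : (SetPartitionWords n k).Finite := by
  refine (Fintype.piFinset fun _ => range (k + 1)).finite_toSet.subset fun π hπ => ?_
  obtain ⟨-, hk⟩ := mem_setPartitionWords_iff.mp hπ
  simpa [Nat.lt_succ_iff, ← hk] using fun i => le_sup (f := π) (mem_univ i)

noncomputable instance (n k : ℕ) : Fintype (SetPartitionWords n k) :=
  (setPartitionWords_finite n k).fintype

theorem snoc_mem_setPartitionWords_iff {n k : ℕ} (hk : 1 ≤ k) {σ : Fin n → ℕ} {c : ℕ} :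
    (Fin.snoc σ c : Fin (n + 1) → ℕ) ∈ SetPartitionWords (n + 1) k ↔
      σ ∈ SetPartitionWords n k ∧ c ∈ Icc 1 k ∨ σ ∈ SetPartitionWords n (k - 1) ∧ c = k := by
  simp only [mem_setPartitionWords_iff, isRestrictedGrowth_snoc_iff, Fin.sup_univ_snoc, mem_Icc]
  grind

theorem sum_setPartitionWords_succ {M : Type*} [AddCommMonoid M] {n k : ℕ} (hk : 1 ≤ k)
    (f : (Fin (n + 1) → ℕ) → M) :
    ∑ π ∈ (SetPartitionWords (n + 1) k).toFinset, f π =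
      ∑ σ ∈ (SetPartitionWords n k).toFinset, ∑ c ∈ Icc 1 k, f (Fin.snoc σ c) +
        ∑ σ ∈ (SetPartitionWords n (k - 1)).toFinset, f (Fin.snoc σ k) := by
  have hdisj : Disjoint ((SetPartitionWords n k).toFinset ×ˢ Icc 1 k)
      ((SetPartitionWords n (k - 1)).toFinset ×ˢ {k}) := by
    rw [disjoint_left]
    rintro ⟨σ, c⟩ h h'
    simp only [mem_product, Set.mem_toFinset, mem_setPartitionWords_iff] at h h'
    omega
  calc ∑ π ∈ (SetPartitionWords (n + 1) k).toFinset, f π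
      = ∑ p ∈ (SetPartitionWords n k).toFinset ×ˢ Icc 1 k ∪
          (SetPartitionWords n (k - 1)).toFinset ×ˢ {k}, f (Fin.snoc p.1 p.2) := by
        refine sum_nbij' (fun π => (Fin.init π, π (Fin.last n))) (fun p => Fin.snoc p.1 p.2)
          (fun π hπ => ?_) (fun p hp => ?_) (fun π _ => Fin.snoc_init_self π)
          (fun p _ => by simp) (fun π _ => by simp)
        · rw [Set.mem_toFinset, ← Fin.snoc_init_self π, snoc_mem_setPartitionWords_iff hk] at hπ
          simpa [eq_comm] using hπ
        · simp only [mem_union, mem_product, Set.mem_toFinset, mem_singleton] at hp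
          rw [Set.mem_toFinset, snoc_mem_setPartitionWords_iff hk]
          exact hp
    _ = _ := by rw [sum_union hdisj, sum_product, sum_product]; simp

theorem card_setPartitionWords (n k : ℕ) :
    #(SetPartitionWords n k).toFinset = Nat.stirlingSecond n k := by
  induction n generalizing k with
  | zero =>
    have : SetPartitionWords 0 k = if k = 0 then Set.univ else ∅ := by
      ext π
      simp [mem_setPartitionWords_iff, IsRestrictedGrowth, eq_comm]
    cases k <;> simp [this]
  | succ n ih =>
    rcases Nat.eq_zero_or_pos k with rfl | hk
    · suffices SetPartitionWords (n + 1) 0 = ∅ by simp [this]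
      refine Set.eq_empty_of_forall_notMem fun π hπ => ?_
      obtain ⟨hπ, h0⟩ := mem_setPartitionWords_iff.mp hπ
      have := (hπ 0).1.trans (le_sup (f := π) (mem_univ 0))
      omega
    · rw [card_eq_sum_ones, sum_setPartitionWords_succ (n := n) hk fun _ => 1]
      simp only [sum_const, Nat.card_Icc, smul_eq_mul, mul_one, Nat.add_sub_cancel, ih]
      rw [Nat.stirlingSecond_succ_left _ _ hk.ne', mul_comm]

theorem card_parts_ofSetoid_ker {n : ℕ} {π : Fin n → ℕ} (hπ : IsRestrictedGrowth π)
    [DecidableRel (Setoid.ker π).r] :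
    #(Finpartition.ofSetoid (Setoid.ker π)).parts = univ.sup π := by
  rw [Finpartition.parts_eq_image_part, ← hπ.card_image_eq_sup]
  exact card_image_eq_of_forall_eq_iff fun a _ b _ => Finpartition.part_ofSetoid_eq_iff

theorem stirlingS2_eq_natCard (n k : ℕ) : stirlingS2 n k = Nat.card (SetPartitionWords n k) := by
  classical
  let Φ (π : SetPartitionWords n k) :
      {P : Finpartition (univ : Finset (Fin n)) // #P.parts = k} :=
    ⟨.ofSetoid (Setoid.ker π.1), by
      obtain ⟨hπ, hk⟩ := mem_setPartitionWords_iff.mp π.2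
      rw [card_parts_ofSetoid_ker hπ, hk]⟩
  refine (Nat.card_congr (Equiv.ofBijective Φ ⟨fun π π' h => ?_, fun P => ?_⟩)).symm
  · obtain ⟨hπ, -⟩ := mem_setPartitionWords_iff.mp π.2
    obtain ⟨hπ', -⟩ := mem_setPartitionWords_iff.mp π'.2
    refine Subtype.ext (hπ.eq_of_forall_eq_iff hπ' fun i j => ?_)
    have := congrArg (fun P => P.1.part i = P.1.part j) h
    simpa [Φ, Finpartition.part_ofSetoid_eq_iff, Setoid.ker_def] using this
  · obtain ⟨π, hπ, hπP⟩ := exists_isRestrictedGrowth_forall_eq_iff (Setoid.ker P.1.part)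
    have hΦ : Finpartition.ofSetoid (Setoid.ker π) = P.1 :=
      Finpartition.ext_of_part_eq_part_iff fun i _ j _ => by
        rw [Finpartition.part_ofSetoid_eq_iff, Setoid.ker_def, hπP, Setoid.ker_def]
    have hk : univ.sup π = k := by
      rw [← card_parts_ofSetoid_ker hπ, hΦ, P.2]
    exact ⟨⟨π, mem_setPartitionWords_iff.mpr ⟨hπ, hk⟩⟩, Subtype.ext hΦ⟩

theorem stirlingS2_eq_stirlingSecond (n k : ℕ) : stirlingS2 n k = Nat.stirlingSecond n k := by
  rw [stirlingS2_eq_natCard, Nat.card_eq_card_toFinset, card_setPartitionWords]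

def IsNonsymPeak (a b c : ℕ) : Prop := a < b ∧ c < b ∧ a ≠ c

instance (a b c : ℕ) : Decidable (IsNonsymPeak a b c) :=
  inferInstanceAs (Decidable (_ ∧ _ ∧ _))

def letter {n : ℕ} (π : Fin n → ℕ) (m : ℕ) : ℕ := if h : m < n then π ⟨m, h⟩ else 0

theorem letter_snoc_of_lt {n : ℕ} (σ : Fin n → ℕ) (c : ℕ) {m : ℕ} (hm : m < n) :
    letter (Fin.snoc σ c : Fin (n + 1) → ℕ) m = letter σ m := by
  simp [letter, hm, Nat.lt_succ_of_lt hm, Fin.snoc, Fin.castLT]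

theorem letter_snoc_self {n : ℕ} (σ : Fin n → ℕ) (c : ℕ) :
    letter (Fin.snoc σ c : Fin (n + 1) → ℕ) n = c := by
  simp [letter, Fin.snoc]

theorem nonsympeak_eq_card {n : ℕ} (π : Fin n → ℕ) :
    nonsympeak π =
      #{ℓ ∈ range (n - 2) | IsNonsymPeak (letter π ℓ) (letter π (ℓ + 1)) (letter π (ℓ + 2))} := by
  rw [nonsympeak, ← Set.ncard_image_of_injective _ Fin.val_injective, ← Set.ncard_coe_finset]
  congr 1
  ext m
  simp only [Set.mem_image, Set.mem_ofPred_eq, coe_filter, mem_range]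
  constructor
  · rintro ⟨ℓ, ⟨h, hpeak⟩, rfl⟩
    refine ⟨by omega, ?_⟩
    simpa [IsNonsymPeak, letter, h, show (ℓ : ℕ) + 1 < n by omega] using hpeak
  · rintro ⟨hm, hpeak⟩
    refine ⟨⟨m, by omega⟩, ⟨by simp; omega, ?_⟩, rfl⟩
    simpa [IsNonsymPeak, letter, show m < n by omega, show m + 1 < n by omega,
      show m + 2 < n by omega] using hpeak

theorem nonsympeak_snoc {n : ℕ} (hn : 2 ≤ n) (σ : Fin n → ℕ) (c : ℕ) :
    nonsympeak (Fin.snoc σ c : Fin (n + 1) → ℕ) =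
      nonsympeak σ + if IsNonsymPeak (letter σ (n - 2)) (letter σ (n - 1)) c then 1 else 0 := by
  have hlast : n + 1 - 2 = n - 2 + 1 := by omega
  rw [nonsympeak_eq_card, nonsympeak_eq_card, hlast, range_add_one, filter_insert]
  have hold : ∀ ℓ ∈ range (n - 2),
      IsNonsymPeak (letter (Fin.snoc σ c : Fin (n + 1) → ℕ) ℓ)
          (letter (Fin.snoc σ c : Fin (n + 1) → ℕ) (ℓ + 1))
          (letter (Fin.snoc σ c : Fin (n + 1) → ℕ) (ℓ + 2)) ↔
      IsNonsymPeak (letter σ ℓ) (letter σ (ℓ + 1)) (letter σ (ℓ + 2)) := by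
    intro ℓ hℓ
    rw [mem_range] at hℓ
    rw [letter_snoc_of_lt _ _ (by omega), letter_snoc_of_lt _ _ (by omega),
      letter_snoc_of_lt _ _ (by omega)]
  rw [filter_congr hold, show n - 2 + 1 = n - 1 by omega, show n - 2 + 2 = n by omega,
    letter_snoc_of_lt _ _ (by omega), letter_snoc_of_lt _ _ (by omega), letter_snoc_self]
  split_ifs
  · rw [card_insert_of_notMem (by simp), add_comm]
  · rfl

def peakCompletions (a b : ℕ) : ℕ := if a < b then b - 2 else 0

theorem card_filter_isNonsymPeak {a b k : ℕ} (ha : 1 ≤ a) (hb : b ≤ k) :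
    #{c ∈ Icc 1 k | IsNonsymPeak a b c} = peakCompletions a b := by
  unfold peakCompletions
  split_ifs with hab
  · have : {c ∈ Icc 1 k | IsNonsymPeak a b c} = (Icc 1 (b - 1)).erase a := by
      ext c
      rw [mem_filter]
      simp only [IsNonsymPeak, mem_Icc, mem_erase]
      omega
    rw [this, card_erase_of_mem (by simp; omega), Nat.card_Icc]
    omega
  · simp [IsNonsymPeak, hab]

theorem sum_sum_peakCompletions (k : ℕ) :
    ∑ a ∈ Icc 1 k, ∑ b ∈ Icc 1 k, peakCompletions a b = 2 * k.choose 3 := by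
  induction k with
  | zero => simp
  | succ k ih =>
    have hrow : ∀ a ∈ Icc 1 k, ∑ b ∈ Icc 1 (k + 1), peakCompletions a b =
        ∑ b ∈ Icc 1 k, peakCompletions a b + (k - 1) := fun a ha => by
      rw [sum_Icc_succ_top (by omega), peakCompletions, if_pos (by simp at ha; omega)]
      rfl
    have hlast : ∑ b ∈ Icc 1 (k + 1), peakCompletions (k + 1) b = 0 :=
      sum_eq_zero fun b hb => if_neg (by simp at hb; omega)
    have hchoose : (k + 1).choose 3 = k.choose 2 + k.choose 3 := Nat.choose_succ_succ' k 2
    have htwo : 2 * k.choose 2 = k * (k - 1) := by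
      have := Nat.even_iff.mp (Nat.even_mul_pred_self k)
      rw [Nat.choose_two_right]
      omega
    rw [sum_Icc_succ_top (by omega), hlast, sum_congr rfl hrow, sum_add_distrib, ih, sum_const,
      Nat.card_Icc, smul_eq_mul, Nat.add_sub_cancel, hchoose]
    omega

theorem letter_le_of_mem {n k : ℕ} {π : Fin n → ℕ} (hπ : π ∈ SetPartitionWords n k) (m : ℕ) :
    letter π m ≤ k := by
  unfold letter
  split_ifs
  · exact (mem_setPartitionWords_iff.mp hπ).2 ▸ le_sup (mem_univ _)
  · exact Nat.zero_le k

theorem one_le_letter_of_mem {n k : ℕ} {π : Fin n → ℕ} (hπ : π ∈ SetPartitionWords n k) {m : ℕ}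
    (hm : m < n) : 1 ≤ letter π m := by
  rw [letter, dif_pos hm]
  exact ((mem_setPartitionWords_iff.mp hπ).1 _).1

theorem sum_peakCompletions {n k : ℕ} (hn : 2 ≤ n) (hk : 1 ≤ k) :
    ∑ π ∈ (SetPartitionWords n k).toFinset, peakCompletions (letter π (n - 2)) (letter π (n - 1)) =
      2 * k.choose 3 * Nat.stirlingSecond (n - 2) k +
        (k - 2) * Nat.stirlingSecond (n - 1) (k - 1) := by
  obtain ⟨m, rfl⟩ : ∃ m, n = m + 2 := ⟨n - 2, by omega⟩
  have hnew : ∀ σ ∈ (SetPartitionWords (m + 1) (k - 1)).toFinset,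
      peakCompletions (letter σ m) k = k - 2 := fun σ hσ => by
    have := letter_le_of_mem (Set.mem_toFinset.mp hσ) m
    rw [peakCompletions, if_pos (by omega)]
  have hold : ∑ σ ∈ (SetPartitionWords (m + 1) k).toFinset, ∑ c ∈ Icc 1 k,
      peakCompletions (letter σ m) c = 2 * k.choose 3 * Nat.stirlingSecond m k := by
    have hmax : ∑ c ∈ Icc 1 k, peakCompletions k c = 0 :=
      sum_eq_zero fun c hc => if_neg (by simp at hc; omega)
    rw [sum_setPartitionWords_succ hk]
    simp only [letter_snoc_self, sum_sum_peakCompletions, hmax, sum_const, card_setPartitionWords,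
      smul_eq_mul]
    ring
  rw [sum_setPartitionWords_succ hk]
  simp only [show m + 2 - 2 = m by omega, show m + 2 - 1 = m + 1 by omega,
    letter_snoc_of_lt _ _ (Nat.lt_succ_self m), letter_snoc_self]
  rw [hold, sum_congr rfl hnew, sum_const, card_setPartitionWords, smul_eq_mul, mul_comm (k - 2)]

noncomputable def totalNonsymPeaks (n k : ℕ) : ℕ :=
  ∑ π ∈ (SetPartitionWords n k).toFinset, nonsympeak π

theorem totalNonsymPeaks_succ {n k : ℕ} (hn : 2 ≤ n) (hk : 1 ≤ k) :
    totalNonsymPeaks (n + 1) k = k * totalNonsymPeaks n k + totalNonsymPeaks n (k - 1) +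
      2 * k.choose 3 * Nat.stirlingSecond (n - 2) k +
        (k - 2) * Nat.stirlingSecond (n - 1) (k - 1) := by
  have hold : ∀ σ ∈ (SetPartitionWords n k).toFinset, ∑ c ∈ Icc 1 k,
      nonsympeak (Fin.snoc σ c : Fin (n + 1) → ℕ) =
        k * nonsympeak σ + peakCompletions (letter σ (n - 2)) (letter σ (n - 1)) := fun σ hσ => by
    rw [Set.mem_toFinset] at hσ
    simp only [nonsympeak_snoc hn, sum_add_distrib, sum_const, Nat.card_Icc, Nat.add_sub_cancel,
      smul_eq_mul, sum_boole, Nat.cast_id]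
    rw [card_filter_isNonsymPeak (one_le_letter_of_mem hσ (by omega)) (letter_le_of_mem hσ _),
      mul_comm]
  -- appending the new maximal letter `k` never creates a peak
  have hnew : ∀ σ ∈ (SetPartitionWords n (k - 1)).toFinset,
      nonsympeak (Fin.snoc σ k : Fin (n + 1) → ℕ) = nonsympeak σ := fun σ hσ => by
    have := letter_le_of_mem (Set.mem_toFinset.mp hσ) (n - 1)
    rw [nonsympeak_snoc hn, if_neg (fun h => by unfold IsNonsymPeak at h; omega), add_zero]
  rw [totalNonsymPeaks, sum_setPartitionWords_succ hk, sum_congr rfl hold, sum_congr rfl hnew,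
    sum_add_distrib, ← mul_sum, sum_peakCompletions hn hk, totalNonsymPeaks, totalNonsymPeaks]
  ring

def powStirlingSum (j n k : ℕ) : ℕ :=
  ∑ i ∈ Icc 3 (n - k), j ^ (i - 3) * Nat.stirlingSecond (n - i) k

theorem powStirlingSum_eq_sum_Icc {j n k N : ℕ} (hlo : n - k ≤ N) (hhi : N ≤ n) :
    powStirlingSum j n k = ∑ i ∈ Icc 3 N, j ^ (i - 3) * Nat.stirlingSecond (n - i) k := by
  refine sum_subset (Icc_subset_Icc_right hlo) fun i hi hi' => ?_
  simp only [mem_Icc] at hi hi'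
  rw [Nat.stirlingSecond_eq_zero_of_lt (by omega), mul_zero]

theorem powStirlingSum_succ {j n k : ℕ} (hk : 1 ≤ k) :
    powStirlingSum j (n + 1) k = k * powStirlingSum j n k + powStirlingSum j n (k - 1) := by
  rw [powStirlingSum_eq_sum_Icc (n := n) (N := n + 1 - k) (by omega) (by omega), powStirlingSum,
    powStirlingSum, show n - (k - 1) = n + 1 - k by omega, mul_sum, ← sum_add_distrib]
  refine sum_congr rfl fun i hi => ?_
  rw [mem_Icc] at hi
  rw [show n + 1 - i = n - i + 1 by omega, Nat.stirlingSecond_succ_left _ _ (by omega)]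
  ring

theorem powStirlingSum_pred {n k : ℕ} (hk : 1 ≤ k) (hn : 2 ≤ n) :
    powStirlingSum k n (k - 1) = Nat.stirlingSecond (n - 2) k := by
  obtain ⟨k, rfl⟩ : ∃ k', k = k' + 1 := ⟨k - 1, by omega⟩
  obtain ⟨m, rfl⟩ : ∃ m, n = m + 2 := ⟨n - 2, by omega⟩
  rw [Nat.stirlingSecond_succ_right_eq_sum, Nat.add_sub_cancel,
    powStirlingSum_eq_sum_Icc (N := m + 2) (by omega) le_rfl, ← Finset.Ico_add_one_right_eq_Icc,
    sum_Ico_eq_sum_range]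
  refine sum_congr rfl fun s _ => ?_
  rw [show 3 + s - 3 = s by omega, show m + 2 - (3 + s) = m + 2 - 2 - 1 - s by omega]

def peakFormula (n k : ℕ) : ℕ :=
  (k - 1).choose 2 * Nat.stirlingSecond (n - 1) k +
    2 * ∑ j ∈ Icc 3 k, j.choose 3 * powStirlingSum j n k

theorem peakFormula_succ {n k : ℕ} (hn : 2 ≤ n) (hk : 1 ≤ k) :
    peakFormula (n + 1) k = k * peakFormula n k + peakFormula n (k - 1) +
      2 * k.choose 3 * Nat.stirlingSecond (n - 2) k +
        (k - 2) * Nat.stirlingSecond (n - 1) (k - 1) := by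
  have hchoose : (k - 1).choose 2 = (k - 2).choose 2 + (k - 2) := by
    rcases Nat.lt_or_ge k 3 with h | h
    · interval_cases k <;> rfl
    · rw [show k - 1 = k - 2 + 1 by omega, Nat.choose_succ_succ', Nat.choose_one_right, add_comm]
  have htop : ∑ j ∈ Icc 3 k, j.choose 3 * powStirlingSum j n (k - 1) =
      ∑ j ∈ Icc 3 (k - 1), j.choose 3 * powStirlingSum j n (k - 1) +
        k.choose 3 * Nat.stirlingSecond (n - 2) k := by
    rw [← powStirlingSum_pred hk hn]
    rcases Nat.lt_or_ge k 3 with h | h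
    · rw [Icc_eq_empty (by omega), Icc_eq_empty (by omega), Nat.choose_eq_zero_of_lt h]
      simp
    · obtain ⟨k, rfl⟩ : ∃ k', k = k' + 1 := ⟨k - 1, by omega⟩
      rw [sum_Icc_succ_top (by omega), Nat.add_sub_cancel]
  simp only [peakFormula, powStirlingSum_succ hk, mul_add, sum_add_distrib, htop, hchoose,
    show n + 1 - 1 = (n - 1) + 1 by omega, Nat.stirlingSecond_succ_left _ _ (by omega : k ≠ 0),
    show k - 1 - 1 = k - 2 by omega]
  simp only [mul_left_comm _ k, ← mul_sum]
  ring

theorem totalNonsymPeaks_of_le_two {n : ℕ} (hn : n ≤ 2) (k : ℕ) : totalNonsymPeaks n k = 0 :=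
  sum_eq_zero fun π _ => by simp [nonsympeak_eq_card, show n - 2 = 0 by omega]

theorem peakFormula_of_le_two {n : ℕ} (hn : n ≤ 2) (k : ℕ) : peakFormula n k = 0 := by
  have hS : (k - 1).choose 2 * Nat.stirlingSecond (n - 1) k = 0 := by
    rcases Nat.lt_or_ge (n - 1) k with h | h
    · rw [Nat.stirlingSecond_eq_zero_of_lt h, mul_zero]
    · rw [Nat.choose_eq_zero_of_lt (by omega), zero_mul]
  simp [peakFormula, powStirlingSum, hS, show n - k < 3 by omega]

theorem totalNonsymPeaks_eq_peakFormula (n k : ℕ) :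
    totalNonsymPeaks n k = peakFormula n k := by
  induction n generalizing k with
  | zero => rw [totalNonsymPeaks_of_le_two (by omega), peakFormula_of_le_two (by omega)]
  | succ n ih =>
    rcases Nat.lt_or_ge n 2 with hn | hn
    · rw [totalNonsymPeaks_of_le_two (by omega), peakFormula_of_le_two (by omega)]
    rcases Nat.eq_zero_or_pos k with rfl | hk
    · have : (SetPartitionWords (n + 1) 0).toFinset = ∅ := by
        rw [← card_eq_zero, card_setPartitionWords, Nat.stirlingSecond_succ_zero]
      simp [totalNonsymPeaks, peakFormula, this]
    · rw [totalNonsymPeaks_succ hn hk, peakFormula_succ hn hk, ih, ih]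

theorem total_nonsympeak_eq_general (n k : ℕ) :
    (∑ᶠ π ∈ SetPartitionWords n k, nonsympeak π) =
      Nat.choose (k - 1) 2 * stirlingS2 (n - 1) k +
        2 * ∑ j ∈ Finset.Icc 3 k, Nat.choose j 3 *
          ∑ i ∈ Finset.Icc 3 (n - k), j ^ (i - 3) * stirlingS2 (n - i) k := by
  rw [finsum_mem_eq_toFinset_sum, ← totalNonsymPeaks, totalNonsymPeaks_eq_peakFormula]
  simp only [peakFormula, powStirlingSum, stirlingS2_eq_stirlingSecond]

/-- The total number of non-symmetric peaks over all set partitions of `[n]`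
with exactly `k` blocks equals
`C(k−1,2)·S(n−1,k) + 2·Σ_{j=3}^{k} C(j,3) Σ_{i=3}^{n−k} j^{i−3} S(n−i,k)`. -/
theorem total_nonsympeak_eq (n k : ℕ) (hk : 1 ≤ k) (hkn : k ≤ n) :
    (∑ᶠ π ∈ SetPartitionWords n k, nonsympeak π) =
      Nat.choose (k - 1) 2 * stirlingS2 (n - 1) k +
        2 * ∑ j ∈ Finset.Icc 3 k, Nat.choose j 3 *
          ∑ i ∈ Finset.Icc 3 (n - k), j ^ (i - 3) * stirlingS2 (n - i) k :=
  total_nonsympeak_eq_general n k
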